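/- Let m ≥ 1, let 0 = q_0 < q_1 < ⋯ < q_m and 0 ≤ a_0 < a_1 < ⋯ < a_m be real numbers, set b_0 = 0 and b_k = b_{k−1} + a_{k−1}(q_k − q_{k−1}) for k = 1,…,m, and define the convex PAR Ψ : ℝ → ℝ by Ψ(z) = a_k(|z| − q_k) + b_k whenever q_k ≤ |z| ≤ q_{k+1} (for k = 0,…,m−1) and Ψ(z) = a_m(|z| − q_m) + b_m for |z| ≥ q_m. Fix λ > 0 and x ∈ ℝ, and let Φ(z) = λΨ(z) + (1/2)(z − x)². Then: (i) if |x| ≤ λa_0, then z = 0 is the unique global minimizer of Φ; (ii) for each k ∈ {1,…,m}, if q_k + λa_{k−1} ≤ |x| ≤ q_k + λa_k, then z = sign(x)·q_k is the unique global minimizer of Φ; (iii) for each k ∈ {0,…,m−1}, if q_k + λa_k ≤ |x| ≤ q_{k+1} + λa_k, then z = x − sign(x)·λa_k is the unique global minimizer of Φ; and if |x| ≥ q_m + λa_m, then z = x − sign(x)·λa_m is the unique global minimizer of Φ. -/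

import Mathlib

/-!
Every candidate `z*` lies on the side of `x`, so `(z* - x)² = (|z*| - |x|)²`, while
`(z - x)² ≥ (|z| - |x|)²` for all `z`. Hence `z*` is the strict minimizer as soon as
`|x| - |z*|` is a subgradient of `λΨ` along `|·|` at `|z*|`, i.e.
`λΨ(z*) + (|x| - |z*|)(|z| - |z*|) ≤ λΨ(z)`: completing the square then gives
`Φ(z) ≥ Φ(z*) + ½(|z| - |z*|)²`. Because the slopes increase, `Ψ(z)` dominates every
affine piece `a_j(|z| - q_j) + b_j`, so a piece touching `Ψ` at `|z*|` is a supporting line.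
In the regime of `|x|` assigned to each candidate, `(|x| - |z*|)/λ` is the slope `a_k` of the
piece through `|z*|`, or lies between the slopes `a_k ≤ a_{k+1}` meeting at the breakpoint
`q_{k+1}`, or below `a_0` at the origin.
-/

namespace Real

theorem sign_mul_self_eq_abs (x : ℝ) : sign x * x = |x| := by
  rcases lt_trichotomy x 0 with hx | rfl | hx
  · rw [sign_of_neg hx, abs_of_neg hx, neg_one_mul]
  · simp
  · rw [sign_of_pos hx, abs_of_pos hx, one_mul]

theorem sign_mul_abs (x : ℝ) : sign x * |x| = x := by
  rcases lt_trichotomy x 0 with hx | rfl | hx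
  · rw [sign_of_neg hx, abs_of_neg hx, neg_one_mul, neg_neg]
  · simp
  · rw [sign_of_pos hx, abs_of_pos hx, one_mul]

theorem sub_sign_mul_eq_sign_mul (x c : ℝ) : x - sign x * c = sign x * (|x| - c) := by
  rw [mul_sub, sign_mul_abs]

theorem abs_sign_mul_of_le_abs {x r : ℝ} (hr : 0 ≤ r) (hrx : r ≤ |x|) : |sign x * r| = r := by
  rcases lt_trichotomy x 0 with hx | rfl | hx
  · rw [sign_of_neg hx, neg_one_mul, abs_neg, abs_of_nonneg hr]
  · simp only [abs_zero] at hrx; simp [le_antisymm hrx hr]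
  · rw [sign_of_pos hx, one_mul, abs_of_nonneg hr]

end Real

theorem prox_lt_of_abs_subgradient (Ψ : ℝ → ℝ) {lam x zs s z : ℝ} (hlam : 0 ≤ lam)
    (hsub : ∀ w, Ψ zs + s * (|w| - |zs|) ≤ Ψ w) (hs : |zs| + lam * s = |x|)
    (halign : zs * x = |zs| * |x|) (hx : zs ≠ 0 → x ≠ 0) (hz : z ≠ zs) :
    lam * Ψ zs + 1 / 2 * (zs - x) ^ 2 < lam * Ψ z + 1 / 2 * (z - x) ^ 2 := by
  have hgap : 0 < (|z| - |zs|) ^ 2 + 2 * (|z| * |x| - z * x) := by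
    rcases eq_or_ne |z| |zs| with h | h
    · obtain rfl : z = -zs := (abs_eq_abs.1 h).resolve_left hz
      have hzs : zs ≠ 0 := fun h0 => hz (by simp [h0])
      have : 0 < zs * x := halign ▸ mul_pos (abs_pos.2 hzs) (abs_pos.2 (hx hzs))
      rw [abs_neg, sub_self]
      nlinarith
    · have := sq_pos_of_ne_zero (sub_ne_zero.2 h)
      nlinarith [le_abs_self (z * x), abs_mul z x]
  have hexpand : 1 / 2 * (z - x) ^ 2 - 1 / 2 * (zs - x) ^ 2
      = 1 / 2 * ((|z| - |zs|) ^ 2 + 2 * (|z| * |x| - z * x)) - lam * s * (|z| - |zs|) := by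
    linear_combination (-1 / 2) * sq_abs z + (1 / 2) * sq_abs zs + halign + (|z| - |zs|) * hs
  linarith [mul_le_mul_of_nonneg_left (hsub z) hlam]

theorem prox_sign_mul_lt (Ψ : ℝ → ℝ) {lam x r s z : ℝ} (hlam : 0 ≤ lam) (hr : 0 ≤ r)
    (hrx : r ≤ |x|) (hs : r + lam * s = |x|)
    (hsub : ∀ w, Ψ (Real.sign x * r) + s * (|w| - r) ≤ Ψ w) (hz : z ≠ Real.sign x * r) :
    lam * Ψ (Real.sign x * r) + 1 / 2 * (Real.sign x * r - x) ^ 2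
      < lam * Ψ z + 1 / 2 * (z - x) ^ 2 := by
  have habs := Real.abs_sign_mul_of_le_abs hr hrx
  refine prox_lt_of_abs_subgradient Ψ hlam (by rwa [habs]) (by rwa [habs]) ?_ ?_ hz
  · rw [habs, mul_right_comm, Real.sign_mul_self_eq_abs, mul_comm]
  · rintro h rfl; simp at h

theorem monotoneOn_Icc_of_le_succ {α : Type*} [Preorder α] {f : ℕ → α} {k n : ℕ}
    (hf : ∀ i, k ≤ i → i < n → f i ≤ f (i + 1)) : MonotoneOn f (Set.Icc k n) := by
  intro i hi j hj hij
  induction j, hij using Nat.le_induction with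
  | base => exact le_rfl
  | succ j hij ih =>
    exact (ih ⟨hi.1.trans hij, j.le_succ.trans hj.2⟩).trans (hf j (hi.1.trans hij) hj.2)

theorem antitoneOn_Icc_of_succ_le {α : Type*} [Preorder α] {f : ℕ → α} {k n : ℕ}
    (hf : ∀ i, k ≤ i → i < n → f (i + 1) ≤ f i) : AntitoneOn f (Set.Icc k n) :=
  @monotoneOn_Icc_of_le_succ αᵒᵈ _ f k n hf

theorem exists_le_lt_succ_of_le_of_lt {α : Type*} [LinearOrder α] {f : ℕ → α} {t : α}
    {n : ℕ} (h0 : f 0 ≤ t) (hn : t < f n) : ∃ k < n, f k ≤ t ∧ t < f (k + 1) := by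
  induction n with
  | zero => exact absurd (h0.trans_lt hn) (lt_irrefl _)
  | succ n ih =>
    by_cases hfn : f n ≤ t
    · exact ⟨n, n.lt_succ_self, hfn, hn⟩
    · obtain ⟨k, hk, hkt⟩ := ih (not_le.1 hfn)
      exact ⟨k, hk.trans n.lt_succ_self, hkt⟩

def parPiece (q a b : ℕ → ℝ) (k : ℕ) (t : ℝ) : ℝ := a k * (t - q k) + b k

theorem parPiece_eq_add (q a b : ℕ → ℝ) (k : ℕ) (t u : ℝ) :
    parPiece q a b k u = parPiece q a b k t + a k * (u - t) := by
  unfold parPiece; ring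

structure IsConvexPAR (m : ℕ) (q a b : ℕ → ℝ) (Ψ : ℝ → ℝ) : Prop where
  one_le : 1 ≤ m
  q_zero : q 0 = 0
  q_lt_succ : ∀ k < m, q k < q (k + 1)
  a_zero_nonneg : 0 ≤ a 0
  a_lt_succ : ∀ k < m, a k < a (k + 1)
  b_zero : b 0 = 0
  b_succ : ∀ k < m, b (k + 1) = b k + a k * (q (k + 1) - q k)
  eq_of_mem : ∀ z : ℝ, ∀ k < m, q k ≤ |z| → |z| ≤ q (k + 1) →
    Ψ z = parPiece q a b k |z|
  eq_of_le : ∀ z : ℝ, q m ≤ |z| → Ψ z = parPiece q a b m |z|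

namespace IsConvexPAR

variable {m : ℕ} {q a b : ℕ → ℝ} {Ψ : ℝ → ℝ}

theorem q_mono (h : IsConvexPAR m q a b Ψ) : MonotoneOn q (Set.Icc 0 m) :=
  monotoneOn_Icc_of_le_succ fun k _ hk => (h.q_lt_succ k hk).le

theorem a_mono (h : IsConvexPAR m q a b Ψ) : MonotoneOn a (Set.Icc 0 m) :=
  monotoneOn_Icc_of_le_succ fun k _ hk => (h.a_lt_succ k hk).le

theorem q_nonneg (h : IsConvexPAR m q a b Ψ) {k : ℕ} (hk : k ≤ m) : 0 ≤ q k :=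
  h.q_zero ▸ h.q_mono ⟨le_rfl, m.zero_le⟩ ⟨k.zero_le, hk⟩ k.zero_le

theorem a_nonneg (h : IsConvexPAR m q a b Ψ) {k : ℕ} (hk : k ≤ m) : 0 ≤ a k :=
  h.a_zero_nonneg.trans (h.a_mono ⟨le_rfl, m.zero_le⟩ ⟨k.zero_le, hk⟩ k.zero_le)

theorem parPiece_q_succ (h : IsConvexPAR m q a b Ψ) {k : ℕ} (hk : k < m) :
    parPiece q a b k (q (k + 1)) = b (k + 1) := by
  rw [parPiece, h.b_succ k hk]; ring

theorem parPiece_succ (h : IsConvexPAR m q a b Ψ) {k : ℕ} (hk : k < m) (t : ℝ) :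
    parPiece q a b (k + 1) t = parPiece q a b k t + (a (k + 1) - a k) * (t - q (k + 1)) := by
  rw [parPiece_eq_add q a b k (q (k + 1)), h.parPiece_q_succ hk, parPiece]; ring

theorem parPiece_le_of_q_le (h : IsConvexPAR m q a b Ψ) {j k : ℕ} (hjk : j ≤ k) (hk : k ≤ m)
    {t : ℝ} (ht : q k ≤ t) : parPiece q a b j t ≤ parPiece q a b k t := by
  refine monotoneOn_Icc_of_le_succ (f := fun i => parPiece q a b i t) (fun i _ hi => ?_)
    ⟨le_rfl, hjk⟩ ⟨hjk, le_rfl⟩ hjk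
  have hqt : q (i + 1) ≤ t :=
    (h.q_mono ⟨(i + 1).zero_le, by omega⟩ ⟨k.zero_le, hk⟩ hi).trans ht
  rw [h.parPiece_succ (by omega)]
  nlinarith [(h.a_lt_succ i (by omega)).le]

theorem parPiece_le_of_le_q (h : IsConvexPAR m q a b Ψ) {k j : ℕ} (hkj : k ≤ j) (hj : j ≤ m)
    {t : ℝ} (ht : t ≤ q (k + 1)) : parPiece q a b j t ≤ parPiece q a b k t := by
  refine antitoneOn_Icc_of_succ_le (f := fun i => parPiece q a b i t) (fun i hi hij => ?_)
    ⟨le_rfl, hkj⟩ ⟨hkj, le_rfl⟩ hkj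
  have hqt : t ≤ q (i + 1) :=
    ht.trans (h.q_mono ⟨(k + 1).zero_le, by omega⟩ ⟨(i + 1).zero_le, by omega⟩ (by omega))
  rw [h.parPiece_succ (by omega)]
  nlinarith [(h.a_lt_succ i (by omega)).le]

theorem parPiece_le (h : IsConvexPAR m q a b Ψ) {j : ℕ} (hj : j ≤ m) (z : ℝ) :
    parPiece q a b j |z| ≤ Ψ z := by
  rcases le_or_gt (q m) |z| with hz | hz
  · rw [h.eq_of_le z hz]
    exact h.parPiece_le_of_q_le hj le_rfl hz
  · obtain ⟨k, hk, hkz, hzk⟩ := exists_le_lt_succ_of_le_of_lt (h.q_zero ▸ abs_nonneg z) hz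
    rw [h.eq_of_mem z k hk hkz hzk.le]
    rcases le_total j k with hjk | hkj
    · exact h.parPiece_le_of_q_le hjk hk.le hkz
    · exact h.parPiece_le_of_le_q hkj hj hzk.le

theorem add_mul_le_of_eq_parPiece (h : IsConvexPAR m q a b Ψ) {k : ℕ} (hk : k ≤ m) {z t : ℝ}
    (hz : Ψ z = parPiece q a b k t) (w : ℝ) : Ψ z + a k * (|w| - t) ≤ Ψ w := by
  rw [hz, ← parPiece_eq_add]
  exact h.parPiece_le hk w

theorem add_mul_le_of_abs_eq_q_succ (h : IsConvexPAR m q a b Ψ) {k : ℕ} (hk : k < m) {z s : ℝ}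
    (hz : |z| = q (k + 1)) (hs₁ : a k ≤ s) (hs₂ : s ≤ a (k + 1)) (w : ℝ) :
    Ψ z + s * (|w| - q (k + 1)) ≤ Ψ w := by
  have hΨz : Ψ z = parPiece q a b k (q (k + 1)) :=
    hz ▸ h.eq_of_mem z k hk (hz ▸ (h.q_lt_succ k hk).le) hz.le
  have hleft := h.add_mul_le_of_eq_parPiece hk.le hΨz w
  have hright := h.add_mul_le_of_eq_parPiece hk (t := q (k + 1))
    (hΨz.trans (by rw [h.parPiece_q_succ hk, parPiece]; ring)) w
  rcases le_total |w| (q (k + 1)) with hw | hw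
  · nlinarith
  · nlinarith

theorem add_mul_abs_le_of_le_a_zero (h : IsConvexPAR m q a b Ψ) {s : ℝ} (hs : s ≤ a 0)
    (w : ℝ) : Ψ 0 + s * |w| ≤ Ψ w := by
  have hΨ0 : Ψ 0 = parPiece q a b 0 |0| :=
    h.eq_of_mem 0 0 h.one_le (by simp [h.q_zero]) (by simpa using h.q_nonneg h.one_le)
  have := h.add_mul_le_of_eq_parPiece (Nat.zero_le m) hΨ0 w
  rw [abs_zero] at this
  nlinarith [mul_le_mul_of_nonneg_right hs (abs_nonneg w)]

theorem prox_lt_of_eq_parPiece (h : IsConvexPAR m q a b Ψ) {lam x z : ℝ} {k : ℕ}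
    (hlam : 0 ≤ lam) (hk : k ≤ m) (hx : q k + lam * a k ≤ |x|)
    (hval : ∀ w, |w| = |x| - lam * a k → Ψ w = parPiece q a b k |w|)
    (hz : z ≠ x - Real.sign x * (lam * a k)) :
    lam * Ψ (x - Real.sign x * (lam * a k)) + 1 / 2 * (x - Real.sign x * (lam * a k) - x) ^ 2
      < lam * Ψ z + 1 / 2 * (z - x) ^ 2 := by
  rw [Real.sub_sign_mul_eq_sign_mul] at hz ⊢
  have hr : 0 ≤ |x| - lam * a k := by linarith [h.q_nonneg hk]
  have hrx : |x| - lam * a k ≤ |x| := by nlinarith [h.a_nonneg hk]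
  have habs := Real.abs_sign_mul_of_le_abs hr hrx
  exact prox_sign_mul_lt Ψ hlam hr hrx (by ring)
    (h.add_mul_le_of_eq_parPiece hk ((hval _ habs).trans (by rw [habs]))) hz

end IsConvexPAR

theorem prox_convex_par
    (m : ℕ) (hm : 1 ≤ m)
    (q a b : ℕ → ℝ)
    (hq0 : q 0 = 0) (hqmono : ∀ k < m, q k < q (k + 1))
    (ha0 : 0 ≤ a 0) (hamono : ∀ k < m, a k < a (k + 1))
    (hb0 : b 0 = 0) (hbrec : ∀ k < m, b (k + 1) = b k + a k * (q (k + 1) - q k))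
    (Ψ : ℝ → ℝ)
    (hΨ : ∀ z : ℝ, ∀ k < m, q k ≤ |z| → |z| ≤ q (k + 1) →
      Ψ z = a k * (|z| - q k) + b k)
    (hΨtop : ∀ z : ℝ, q m ≤ |z| → Ψ z = a m * (|z| - q m) + b m)
    (lam : ℝ) (hlam : 0 < lam) (x : ℝ)
    (Φ : ℝ → ℝ) (hΦ : ∀ z, Φ z = lam * Ψ z + (1 / 2) * (z - x) ^ 2) :
    -- (i) small inputs are mapped to 0
    (|x| ≤ lam * a 0 → ∀ z : ℝ, z ≠ 0 → Φ 0 < Φ z) ∧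
    -- (ii) inputs in [q k + λ a (k-1), q k + λ a k] are mapped to sign(x)·q k
    (∀ k < m, q (k + 1) + lam * a k ≤ |x| → |x| ≤ q (k + 1) + lam * a (k + 1) →
      ∀ z : ℝ, z ≠ Real.sign x * q (k + 1) → Φ (Real.sign x * q (k + 1)) < Φ z) ∧
    -- (iii) inputs in [q k + λ a k, q (k+1) + λ a k] are mapped to x − sign(x)·λ a k
    (∀ k < m, q k + lam * a k ≤ |x| → |x| ≤ q (k + 1) + lam * a k →
      ∀ z : ℝ, z ≠ x - Real.sign x * (lam * a k) →
        Φ (x - Real.sign x * (lam * a k)) < Φ z) ∧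
    -- (iii') inputs beyond q m + λ a m are mapped to x − sign(x)·λ a m
    (q m + lam * a m ≤ |x| →
      ∀ z : ℝ, z ≠ x - Real.sign x * (lam * a m) →
        Φ (x - Real.sign x * (lam * a m)) < Φ z) := by
  have hpar : IsConvexPAR m q a b Ψ :=
    ⟨hm, hq0, hqmono, ha0, hamono, hb0, hbrec, hΨ, hΨtop⟩
  simp only [hΦ]
  refine ⟨fun hx z hz => ?_, fun k hk hx₁ hx₂ z hz => ?_, fun k hk hx₁ hx₂ z hz => ?_,
    fun hx z hz => ?_⟩
  · refine prox_lt_of_abs_subgradient Ψ hlam.le (s := |x| / lam) (fun w => ?_)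
      (by field_simp; simp) (by simp) (by simp) hz
    simpa using hpar.add_mul_abs_le_of_le_a_zero ((div_le_iff₀' hlam).2 hx) w
  · have hq : 0 ≤ q (k + 1) := hpar.q_nonneg hk
    have hqx : q (k + 1) ≤ |x| := by nlinarith [hpar.a_nonneg hk.le]
    refine prox_sign_mul_lt Ψ hlam.le hq hqx (s := (|x| - q (k + 1)) / lam)
      (by field_simp; ring)
      (hpar.add_mul_le_of_abs_eq_q_succ hk (Real.abs_sign_mul_of_le_abs hq hqx) ?_ ?_) hz
    · exact (le_div_iff₀' hlam).2 (by linarith)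
    · exact (div_le_iff₀' hlam).2 (by linarith)
  · exact hpar.prox_lt_of_eq_parPiece hlam.le hk.le hx₁
      (fun w hw => hΨ w k hk (by linarith) (by linarith)) hz
  · exact hpar.prox_lt_of_eq_parPiece hlam.le le_rfl hx
      (fun w hw => hΨtop w (by linarith)) hz
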